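/- For every integer n ≥ 1, the number of Dyck paths of semilength 2n (i.e. of length 4n) with an even number of occurrences of the factor udu equals the number of Dyck paths of semilength 2n with an odd number of occurrences of udu; that is, Σ_{k even} T_{2n,k} = Σ_{k odd} T_{2n,k}. -/
import Mathlib


/-- The steps of a Dyck path: up `u = (1,1)` and down `d = (1,-1)`. -/
inductive DStep : Type
  | u : DStep
  | d : DStep
deriving DecidableEq

/-- The height change of a step: `+1` for up, `-1` for down. -/
def DStep.val : DStep → ℤ
  | .u => 1
  | .d => -1

/-- A word over `{u, d}` is a Dyck path if all of its prefix sums are nonnegative and its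
total sum is `0`. -/
def IsDyck (p : List DStep) : Prop :=
  (∀ q : List DStep, q <+: p → 0 ≤ (q.map DStep.val).sum) ∧ (p.map DStep.val).sum = 0

/-- The number of occurrences of the factor `udu` in a Dyck path, i.e. the number of
positions at which three consecutive steps of the path are `u`, `d`, `u`. -/
def countUDU (p : List DStep) : ℕ :=
  ((Finset.range p.length).filter
    fun i => (p.drop i).take 3 = [DStep.u, DStep.d, DStep.u]).card

/-! ### auxiliary definitions and lemmas -/


def sm (l : List DStep) : ℤ := (l.map DStep.val).sum

@[simp] lemma sm_nil : sm [] = 0 := rfl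
@[simp] lemma sm_cons (a : DStep) (l : List DStep) : sm (a :: l) = a.val + sm l := by
  simp [sm]
@[simp] lemma sm_append (x y : List DStep) : sm (x ++ y) = sm x + sm y := by
  simp [sm]

lemma isDyck_iff (p : List DStep) :
    IsDyck p ↔ (∀ q : List DStep, q <+: p → 0 ≤ sm q) ∧ sm p = 0 := Iff.rfl

def cnt : List DStep → ℕ
  | [] => 0
  | a :: l => cnt l + (if (a :: l).take 3 = [DStep.u, DStep.d, DStep.u] then 1 else 0)

lemma countUDU_eq_cnt (p : List DStep) : countUDU p = cnt p := by
  induction p with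
  | nil => rfl
  | cons a l ih =>
    rw [countUDU, Finset.card_filter] at ih ⊢
    simp only [List.length_cons]
    rw [Finset.sum_range_succ']
    simp only [List.drop_succ_cons, List.drop_zero]
    rw [ih, cnt]
@[simp] lemma cnt_nil : cnt [] = 0 := rfl
@[simp] lemma cnt_one (a : DStep) : cnt [a] = 0 := by cases a <;> rfl
@[simp] lemma cnt_two (a b : DStep) : cnt [a, b] = 0 := by cases a <;> cases b <;> rfl
lemma cnt_cons3 (a b c : DStep) (t : List DStep) :
    cnt (a :: b :: c :: t) = cnt (b :: c :: t) +
      (if a = DStep.u ∧ b = DStep.d ∧ c = DStep.u then 1 else 0) := by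
  rw [cnt]
  congr 1
  simp [List.take]

lemma cnt_cons_d (Q : List DStep) : cnt (DStep.d :: Q) = cnt Q := by
  match Q with
  | [] => rfl
  | [a] => cases a <;> rfl
  | a :: b :: t => rw [cnt_cons3]; simp

lemma cnt_cons_u_u (Q : List DStep) : cnt (DStep.u :: DStep.u :: Q) = cnt (DStep.u :: Q) := by
  match Q with
  | [] => rfl
  | a :: t => rw [cnt_cons3]; simp

lemma cnt_append_d : ∀ X : List DStep, cnt (X ++ [DStep.d]) = cnt X
  | [] => rfl
  | [a] => by cases a <;> rfl
  | [a, b] => by cases a <;> cases b <;> rfl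
  | a :: b :: c :: t => by
    have ih := cnt_append_d (b :: c :: t)
    simp only [List.cons_append] at ih ⊢
    rw [cnt_cons3, cnt_cons3, ih]

lemma cnt_mid : ∀ (X Q : List DStep), X.getLast? = some DStep.d →
    cnt (X ++ DStep.d :: Q) = cnt X + cnt Q
  | [], _, h => by simp at h
  | [a], Q, h => by
    simp at h; subst h
    simp only [List.cons_append, List.nil_append, cnt_cons_d, cnt_one]
    omega
  | a :: b :: X', Q, h => by
    have hl : (b :: X').getLast? = some DStep.d := by
      rw [List.getLast?_cons_cons] at h; exact h
    have ih := cnt_mid (b :: X') Q hl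
    match X' with
    | [] =>
      simp only [List.getLast?_singleton, Option.some.injEq] at hl; subst hl
      simp only [List.cons_append, List.nil_append] at ih ⊢
      rw [cnt_cons3, ih]
      simp
    | c :: X'' =>
      simp only [List.cons_append] at ih ⊢
      rw [cnt_cons3, cnt_cons3, ih]
      omega

lemma prefix_append_cases : ∀ (A : List DStep) {q B : List DStep}, q <+: A ++ B →
    q <+: A ∨ ∃ r, r <+: B ∧ q = A ++ r
  | [], q, B, h => Or.inr ⟨q, h, rfl⟩
  | a :: A', q, B, h => by
    cases q with
    | nil => exact Or.inl (List.nil_prefix)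
    | cons x q' =>
      rw [List.cons_append] at h
      obtain ⟨rfl, h'⟩ := List.cons_prefix_cons.mp h
      rcases prefix_append_cases A' h' with h1 | ⟨r, hr, rfl⟩
      · exact Or.inl (List.cons_prefix_cons.mpr ⟨rfl, h1⟩)
      · exact Or.inr ⟨r, hr, rfl⟩

lemma dyck_head {a : DStep} {t : List DStep} (h : IsDyck (a :: t)) : a = DStep.u := by
  have := h.1 [a] ⟨t, rfl⟩
  cases a
  · rfl
  · simp [sm, DStep.val] at this

lemma dyck_head' {p : List DStep} (h : IsDyck p) (hne : p ≠ []) :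
    ∃ t, p = DStep.u :: t := by
  cases p with
  | nil => exact absurd rfl hne
  | cons a t => exact ⟨t, by rw [dyck_head h]⟩

lemma dyck_last {p : List DStep} (h : IsDyck p) (hne : p ≠ []) :
    ∃ Y, p = Y ++ [DStep.d] := by
  rcases List.eq_nil_or_concat p with rfl | ⟨Y, b, rfl⟩
  · exact absurd rfl hne
  · refine ⟨Y, ?_⟩
    have h1 : 0 ≤ sm Y := h.1 Y ⟨[b], by simp [List.concat_eq_append]⟩
    have h2 : sm (Y.concat b) = 0 := h.2
    rw [List.concat_eq_append] at h2 ⊢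
    simp only [sm_append, sm_cons, sm_nil] at h2
    cases b
    · simp [DStep.val] at h2; omega
    · rfl

lemma even_sm_add_len : ∀ l : List DStep, Even (sm l + l.length)
  | [] => by simp
  | a :: t => by
    have ih := even_sm_add_len t
    have : sm (a :: t) + ((a :: t).length : ℤ) = (sm t + t.length) + (a.val + 1) := by
      simp; ring
    rw [this]
    apply ih.add
    cases a <;> simp [DStep.val]

lemma dyck_even_length {p : List DStep} (h : IsDyck p) : Even p.length := by
  have := even_sm_add_len p
  have h2 : sm p = 0 := h.2
  rw [h2, zero_add] at this
  exact_mod_cast this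

lemma isDyck_nil : IsDyck [] := ⟨fun q hq => by simp [List.prefix_nil.mp hq], rfl⟩

lemma isDyck_comp {A B : List DStep} (hA : IsDyck A) (hB : IsDyck B) :
    IsDyck (DStep.u :: (A ++ DStep.d :: B)) := by
  constructor
  · intro q hq
    cases q with
    | nil => simp
    | cons x q' =>
      obtain ⟨rfl, h'⟩ := List.cons_prefix_cons.mp hq
      rcases prefix_append_cases A h' with h1 | ⟨r, hr, rfl⟩
      · have := hA.1 q' h1
        simp [DStep.val]; omega
      · cases r with
        | nil => simp [DStep.val, hA.2]
        | cons y r' =>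
          obtain ⟨rfl, hr'⟩ := List.cons_prefix_cons.mp hr
          have := hB.1 r' hr'
          simp [DStep.val, hA.2]
          omega
  · show sm _ = 0
    have hA2 : sm A = 0 := hA.2
    have hB2 : sm B = 0 := hB.2
    simp [DStep.val, hA2, hB2]

def brk : List DStep → ℕ → List DStep × List DStep
  | [], _ => ([], [])
  | .u :: t, h => (DStep.u :: (brk t (h+1)).1, (brk t (h+1)).2)
  | .d :: t, 0 => ([], t)
  | .d :: t, h+1 => (DStep.d :: (brk t h).1, (brk t h).2)

lemma brk_len : ∀ (l : List DStep) (h : ℕ),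
    (brk l h).1.length + (brk l h).2.length ≤ l.length
  | [], _ => by simp [brk]
  | .u :: t, h => by
    have := brk_len t (h+1); simp only [brk, List.length_cons]; omega
  | .d :: t, 0 => by simp [brk]
  | .d :: t, h+1 => by
    have := brk_len t h; simp only [brk, List.length_cons]; omega

lemma brk_eq : ∀ (R : List DStep) (h : ℕ) (Q : List DStep),
    (∀ q, q <+: R → 0 ≤ (h : ℤ) + sm q) → (h : ℤ) + sm R = 0 →
    brk (R ++ DStep.d :: Q) h = (R, Q)
  | [], h, Q, hpre, htot => by
    have : h = 0 := by simp at htot; omega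
    subst this
    simp [brk]
  | .u :: t, h, Q, hpre, htot => by
    have h1 : ∀ q, q <+: t → 0 ≤ ((h+1 : ℕ) : ℤ) + sm q := by
      intro q hq
      have := hpre (.u :: q) (List.cons_prefix_cons.mpr ⟨rfl, hq⟩)
      simp [DStep.val] at this ⊢
      omega
    have h2 : ((h+1 : ℕ) : ℤ) + sm t = 0 := by
      simp [DStep.val] at htot ⊢
      omega
    have := brk_eq t (h+1) Q h1 h2
    simp only [List.cons_append, brk, List.append_eq, this]
  | .d :: t, h, Q, hpre, htot => by
    have hd := hpre [.d] ⟨t, rfl⟩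
    simp [DStep.val] at hd
    obtain ⟨h', rfl⟩ : ∃ h', h = h' + 1 := ⟨h - 1, by omega⟩
    have h1 : ∀ q, q <+: t → 0 ≤ (h' : ℤ) + sm q := by
      intro q hq
      have := hpre (.d :: q) (List.cons_prefix_cons.mpr ⟨rfl, hq⟩)
      simp [DStep.val] at this ⊢
      omega
    have h2 : (h' : ℤ) + sm t = 0 := by
      simp [DStep.val] at htot ⊢
      omega
    have := brk_eq t h' Q h1 h2
    simp only [List.cons_append, brk, List.append_eq, this]

lemma brk_spec : ∀ (l : List DStep) (h : ℕ),
    (∀ q, q <+: l → 0 ≤ (h : ℤ) + 1 + sm q) → (h : ℤ) + 1 + sm l ≤ 0 →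
    l = (brk l h).1 ++ DStep.d :: (brk l h).2 ∧
    (∀ q, q <+: (brk l h).1 → 0 ≤ (h : ℤ) + sm q) ∧ (h : ℤ) + sm (brk l h).1 = 0
  | [], h, hpre, htot => by simp at htot; omega
  | .u :: t, h, hpre, htot => by
    have h1 : ∀ q, q <+: t → 0 ≤ ((h+1 : ℕ) : ℤ) + 1 + sm q := by
      intro q hq
      have := hpre (.u :: q) (List.cons_prefix_cons.mpr ⟨rfl, hq⟩)
      simp [DStep.val] at this ⊢
      omega
    have h2 : ((h+1 : ℕ) : ℤ) + 1 + sm t ≤ 0 := by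
      simp [DStep.val] at htot ⊢
      omega
    obtain ⟨e1, e2, e3⟩ := brk_spec t (h+1) h1 h2
    refine ⟨?_, ?_, ?_⟩
    · simp only [brk, List.cons_append]
      rw [← e1]
    · intro q hq
      simp only [brk] at hq
      cases q with
      | nil => simp only [sm_nil, add_zero]; positivity
      | cons x q' =>
        obtain ⟨rfl, hq'⟩ := List.cons_prefix_cons.mp hq
        have := e2 q' hq'
        simp [DStep.val] at this ⊢
        omega
    · simp only [brk, sm_cons, DStep.val]
      push_cast at e3 ⊢
      omega
  | .d :: t, 0, hpre, htot => by
    refine ⟨by simp [brk], ?_, by simp [brk]⟩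
    intro q hq
    simp only [brk] at hq
    rw [List.prefix_nil.mp hq]
    simp
  | .d :: t, h+1, hpre, htot => by
    have h1 : ∀ q, q <+: t → 0 ≤ (h : ℤ) + 1 + sm q := by
      intro q hq
      have := hpre (.d :: q) (List.cons_prefix_cons.mpr ⟨rfl, hq⟩)
      simp [DStep.val] at this ⊢
      omega
    have h2 : (h : ℤ) + 1 + sm t ≤ 0 := by
      simp [DStep.val] at htot ⊢
      omega
    obtain ⟨e1, e2, e3⟩ := brk_spec t h h1 h2
    refine ⟨?_, ?_, ?_⟩
    · simp only [brk, List.cons_append]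
      rw [← e1]
    · intro q hq
      simp only [brk] at hq
      cases q with
      | nil => simp only [sm_nil, add_zero]; positivity
      | cons x q' =>
        obtain ⟨rfl, hq'⟩ := List.cons_prefix_cons.mp hq
        have := e2 q' hq'
        simp [DStep.val] at this ⊢
        omega
    · simp only [brk, sm_cons, DStep.val]
      push_cast at e3 ⊢
      omega

lemma dyck_decomp {r : List DStep} (hp : IsDyck (DStep.u :: r)) :
    ∀ P Q, brk r 0 = (P, Q) → r = P ++ DStep.d :: Q ∧ IsDyck P ∧ IsDyck Q := by
  intro P Q hPQ
  have hpre : ∀ q, q <+: r → 0 ≤ ((0 : ℕ) : ℤ) + 1 + sm q := by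
    intro q hq
    have : 0 ≤ sm (.u :: q) := hp.1 (.u :: q) (List.cons_prefix_cons.mpr ⟨rfl, hq⟩)
    simp [DStep.val] at this ⊢
    omega
  have htot : ((0 : ℕ) : ℤ) + 1 + sm r ≤ 0 := by
    have : sm (DStep.u :: r) = 0 := hp.2
    simp [DStep.val] at this ⊢
    omega
  obtain ⟨e1, e2, e3⟩ := brk_spec r 0 hpre htot
  rw [hPQ] at e1 e2 e3
  simp only [Nat.cast_zero, zero_add] at e2 e3
  refine ⟨e1, ⟨fun q hq => e2 q hq, e3⟩, ?_⟩
  constructor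
  · intro q hq
    obtain ⟨t, ht⟩ := hq
    have hpref : DStep.u :: (P ++ DStep.d :: q) <+: DStep.u :: r := by
      refine List.cons_prefix_cons.mpr ⟨rfl, ?_⟩
      rw [e1]
      exact ⟨t, by rw [← ht]; simp⟩
    have h0 : 0 ≤ sm (DStep.u :: (P ++ DStep.d :: q)) := hp.1 _ hpref
    show 0 ≤ sm q
    simp [DStep.val, e3] at h0 ⊢
    omega
  · have h0 : sm (DStep.u :: r) = 0 := hp.2
    rw [e1] at h0
    show sm Q = 0
    simp [DStep.val, e3] at h0 ⊢
    omega

def phiAux : ℕ → List DStep → List DStep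
  | 0, p => p
  | f+1, p =>
    match p with
    | .u :: r =>
      let P := (brk r 0).1
      let Q := (brk r 0).2
      if P = [] then (if Q = [] then .u :: r else .u :: Q ++ [.d])
      else if Q = [] then .u :: .d :: P
      else if P.length % 4 = 0 then .u :: phiAux f P ++ .d :: Q
      else .u :: P ++ .d :: phiAux f Q
    | _ => p

def phi (p : List DStep) : List DStep := phiAux p.length p

lemma phiAux_nil : ∀ g, phiAux g [] = []
  | 0 => rfl
  | _ + 1 => rfl

lemma phiAux_stable : ∀ (f g : ℕ) (p : List DStep), p.length ≤ f → p.length ≤ g →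
    phiAux f p = phiAux g p
  | 0, g, p, h1, _ => by
    have : p = [] := List.length_eq_zero_iff.mp (by omega)
    subst this
    rw [phiAux_nil, phiAux_nil]
  | f+1, 0, p, _, h2 => by
    have : p = [] := List.length_eq_zero_iff.mp (by omega)
    subst this
    rw [phiAux_nil, phiAux_nil]
  | f+1, g+1, p, h1, h2 => by
    cases p with
    | nil => rw [phiAux_nil, phiAux_nil]
    | cons a r =>
      cases a with
      | d => rfl
      | u =>
        have hlen := brk_len r 0
        have hP1 : (brk r 0).1.length ≤ f := by
          simp only [List.length_cons] at h1; omega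
        have hP2 : (brk r 0).1.length ≤ g := by
          simp only [List.length_cons] at h2; omega
        have hQ1 : (brk r 0).2.length ≤ f := by
          simp only [List.length_cons] at h1; omega
        have hQ2 : (brk r 0).2.length ≤ g := by
          simp only [List.length_cons] at h2; omega
        simp only [phiAux]
        rw [phiAux_stable f g (brk r 0).1 hP1 hP2, phiAux_stable f g (brk r 0).2 hQ1 hQ2]

lemma phiAux_succ (f : ℕ) (r : List DStep) :
    phiAux (f+1) (DStep.u :: r) =
      (let P := (brk r 0).1
       let Q := (brk r 0).2
       if P = [] then (if Q = [] then DStep.u :: r else DStep.u :: Q ++ [DStep.d])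
       else if Q = [] then DStep.u :: DStep.d :: P
       else if P.length % 4 = 0 then DStep.u :: phiAux f P ++ DStep.d :: Q
       else DStep.u :: P ++ DStep.d :: phiAux f Q) := rfl

lemma phi_eq {A : List DStep} (hA : IsDyck A) (B : List DStep) :
    phi (DStep.u :: (A ++ DStep.d :: B)) =
      if A = [] then (if B = [] then DStep.u :: (A ++ DStep.d :: B)
          else DStep.u :: (B ++ [DStep.d]))
      else if B = [] then DStep.u :: DStep.d :: A
      else if A.length % 4 = 0 then DStep.u :: (phi A ++ DStep.d :: B)
      else DStep.u :: (A ++ DStep.d :: phi B) := by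
  have hbrk : brk (A ++ DStep.d :: B) 0 = (A, B) := by
    refine brk_eq A 0 B (fun q hq => ?_) ?_
    · have : 0 ≤ sm q := hA.1 q hq
      simp only [Nat.cast_zero, zero_add]
      exact this
    · have : sm A = 0 := hA.2
      simp only [Nat.cast_zero, zero_add]
      exact this
  simp only [phi, List.cons_append, List.length_cons]
  rw [phiAux_succ]
  simp only [hbrk]

  have hsA : A.length ≤ (A ++ DStep.d :: B).length := by simp
  have hsB : B.length ≤ (A ++ DStep.d :: B).length := by simp; omega
  rw [phiAux_stable _ _ _ hsA le_rfl, phiAux_stable _ _ _ hsB le_rfl]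
  rfl

lemma cnt_decomp {A : List DStep} (hA : IsDyck A) (hAe : A ≠ []) (B : List DStep) :
    cnt (DStep.u :: (A ++ DStep.d :: B)) = cnt A + cnt B := by
  obtain ⟨Y, hY⟩ := dyck_last hA hAe
  have hgl : (DStep.u :: A).getLast? = some DStep.d := by
    rw [hY]
    rw [← List.cons_append]
    rw [List.getLast?_concat]
  have h1 : cnt ((DStep.u :: A) ++ DStep.d :: B) = cnt (DStep.u :: A) + cnt B :=
    cnt_mid _ _ hgl
  rw [← List.cons_append]
  rw [h1]
  obtain ⟨A', rfl⟩ := dyck_head' hA hAe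
  rw [cnt_cons_u_u]

lemma master : ∀ (N : ℕ) (p : List DStep), p.length ≤ N → p ≠ [] → IsDyck p →
    p.length % 4 = 0 →
    IsDyck (phi p) ∧ (phi p).length = p.length ∧
      (Even (cnt (phi p)) ↔ ¬ Even (cnt p)) ∧ phi (phi p) = p
  | 0, p, hl, hne, _, _ => by
    simp only [Nat.le_zero, List.length_eq_zero_iff] at hl
    exact absurd hl hne
  | N+1, p, hl, hne, hp, h4 => by
    obtain ⟨r, rfl⟩ := dyck_head' hp hne
    rcases hb : brk r 0 with ⟨P, Q⟩
    obtain ⟨e1, hP, hQ⟩ := dyck_decomp hp P Q hb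
    subst e1
    have hlen : (DStep.u :: (P ++ DStep.d :: Q)).length = P.length + Q.length + 2 := by
      simp
      omega
    have hevP : P.length % 2 = 0 := Nat.even_iff.mp (dyck_even_length hP)
    have hevQ : Q.length % 2 = 0 := Nat.even_iff.mp (dyck_even_length hQ)
    rw [phi_eq hP Q]
    by_cases hPe : P = []
    · subst hPe
      by_cases hQe : Q = []
      · exfalso
        subst hQe
        simp at h4
      · rw [if_pos rfl, if_neg hQe]
        obtain ⟨Q', rfl⟩ := dyck_head' hQ hQe
        refine ⟨?_, ?_, ?_, ?_⟩
        · simpa using isDyck_comp hQ isDyck_nil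
        · simp
        · have c1 : cnt (DStep.u :: ((DStep.u :: Q') ++ [DStep.d]))
              = cnt (DStep.u :: Q') := by
            rw [show DStep.u :: ((DStep.u :: Q') ++ [DStep.d])
                = DStep.u :: DStep.u :: (Q' ++ [DStep.d]) by simp,
              cnt_cons_u_u, ← List.cons_append, cnt_append_d]
          have c2 : cnt (DStep.u :: ([] ++ DStep.d :: (DStep.u :: Q')))
              = cnt (DStep.u :: Q') + 1 := by
            simp only [List.nil_append]
            rw [cnt_cons3, cnt_cons_d]
            simp
          rw [c1, c2]
          simp [Nat.even_add_one]
        · rw [phi_eq hQ [], if_neg hQe]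
          simp
    · by_cases hQe : Q = []
      · subst hQe
        rw [if_neg hPe, if_pos rfl]
        obtain ⟨Y, hY⟩ := dyck_last hP hPe
        refine ⟨?_, ?_, ?_, ?_⟩
        · simpa using isDyck_comp isDyck_nil hP
        · simp
        · have c1 : cnt (DStep.u :: DStep.d :: P) = cnt P + 1 := by
            obtain ⟨P', rfl⟩ := dyck_head' hP hPe
            rw [cnt_cons3, cnt_cons_d]
            simp
          have c2 : cnt (DStep.u :: (P ++ DStep.d :: [])) = cnt P := by
            rw [cnt_decomp hP hPe]
            simp
          rw [c1, c2]
          simp [Nat.even_add_one]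
        · have := phi_eq isDyck_nil P
          simp only [List.nil_append] at this
          rw [this]
          simp [hPe]
      · rw [if_neg hPe, if_neg hQe]
        have hPl : 1 ≤ P.length := by
          cases P
          · exact absurd rfl hPe
          · simp
        have hQl : 1 ≤ Q.length := by
          cases Q
          · exact absurd rfl hQe
          · simp
        have hl' : P.length + Q.length + 2 ≤ N + 1 := by rw [hlen] at hl; exact hl
        have h4' : (P.length + Q.length + 2) % 4 = 0 := by rw [hlen] at h4; exact h4
        by_cases hP4 : P.length % 4 = 0
        · rw [if_pos hP4]
          obtain ⟨iD, iL, iE, iI⟩ := master N P (by omega) hPe hP hP4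
          have iNe : phi P ≠ [] := by
            intro h
            rw [h] at iL
            simp at iL
            omega
          refine ⟨isDyck_comp iD hQ, by simp [iL], ?_, ?_⟩
          · rw [cnt_decomp iD iNe, cnt_decomp hP hPe]
            rw [Nat.even_add, Nat.even_add]
            tauto
          · rw [phi_eq iD Q, if_neg iNe, if_neg hQe, if_pos (by rw [iL]; exact hP4), iI]
        · rw [if_neg hP4]
          have hQ4 : Q.length % 4 = 0 := by omega
          obtain ⟨iD, iL, iE, iI⟩ := master N Q (by omega) hQe hQ hQ4
          have iNe : phi Q ≠ [] := by
            intro h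
            rw [h] at iL
            simp at iL
            omega
          refine ⟨isDyck_comp hP iD, by simp [iL], ?_, ?_⟩
          · rw [cnt_decomp hP hPe, cnt_decomp hP hPe]
            rw [Nat.even_add, Nat.even_add]
            tauto
          · rw [phi_eq hP (phi Q), if_neg hPe, if_neg iNe, if_neg hP4, iI]

/-- For every integer `n ≥ 1`, the number of Dyck paths of semilength `2n` (length `4n`)
with an even number of occurrences of `udu` equals the number of Dyck paths of semilength
`2n` with an odd number of occurrences of `udu`. -/
theorem dyck_even_udu_card_eq_odd_udu_card (n : ℕ) (hn : 1 ≤ n) :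
    {p : List DStep | p.length = 4 * n ∧ IsDyck p ∧ Even (countUDU p)}.ncard =
      {p : List DStep | p.length = 4 * n ∧ IsDyck p ∧ Odd (countUDU p)}.ncard := by
  have key : ∀ p : List DStep, p.length = 4 * n → IsDyck p →
      IsDyck (phi p) ∧ (phi p).length = p.length ∧
        (Even (cnt (phi p)) ↔ ¬ Even (cnt p)) ∧ phi (phi p) = p := by
    intro p hl hp
    refine master (4 * n) p (le_of_eq hl) ?_ hp (by rw [hl]; omega)
    intro h
    rw [h] at hl
    simp at hl
    omega
  have hset : {p : List DStep | p.length = 4 * n ∧ IsDyck p ∧ Odd (countUDU p)}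
      = phi '' {p : List DStep | p.length = 4 * n ∧ IsDyck p ∧ Even (countUDU p)} := by
    ext q
    simp only [Set.mem_image, Set.mem_setOf_eq, countUDU_eq_cnt]
    constructor
    · rintro ⟨h1, h2, h3⟩
      obtain ⟨d1, d2, d3, d4⟩ := key q h1 h2
      exact ⟨phi q, ⟨by rw [d2, h1], d1,
        d3.mpr (Nat.not_even_iff_odd.mpr h3)⟩, d4⟩
    · rintro ⟨p, ⟨h1, h2, h3⟩, rfl⟩
      obtain ⟨d1, d2, d3, d4⟩ := key p h1 h2
      exact ⟨by rw [d2, h1], d1,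
        Nat.not_even_iff_odd.mp (fun he => (d3.mp he) h3)⟩
  rw [hset]
  rw [Set.ncard_image_of_injOn]
  intro p1 hp1 p2 hp2 he
  obtain ⟨_, _, _, i1⟩ := key p1 hp1.1 hp1.2.1
  obtain ⟨_, _, _, i2⟩ := key p2 hp2.1 hp2.2.1
  rw [← i1, ← i2, he]
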